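/- arXiv:1708.01327 — 5 statements merged into one kernel-verified Lean document; each statement's English description precedes it below -/
import Mathlib

section
/- Let A = [[0,1],[-1,2]] and B = [[0,-1],[1,2]] in SL_2(ℤ). For all nonzero integers r and s, every entry of the matrix sgn(rs)·A^r·B^s is greater than or equal to |rs| times the corresponding entry of the identity matrix, and in fact sgn(rs)·A^r·B^s ≫ |rs|·I, where X ≫ Y means every entry of X is greater than or equal to the absolute value of the corresponding entry of Y. -/
open Matrix

/-- `A = [[0,1],[-1,2]]` as an element of `SL₂(ℤ)`. -/
noncomputable def NewmanA : Matrix.SpecialLinearGroup (Fin 2) ℤ :=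
  ⟨!![0, 1; -1, 2], by simp [Matrix.det_fin_two_of]⟩

/-- `B = [[0,-1],[1,2]]` as an element of `SL₂(ℤ)`. -/
noncomputable def NewmanB : Matrix.SpecialLinearGroup (Fin 2) ℤ :=
  ⟨!![0, -1; 1, 2], by simp [Matrix.det_fin_two_of]⟩

/-- `X ≫ Y` : every entry of `X` is at least the absolute value of the
corresponding entry of `Y`. -/
def EntrywiseDom (X Y : Matrix (Fin 2) (Fin 2) ℤ) : Prop :=
  ∀ i j, |Y i j| ≤ X i j

/-! `A = 1 + N` and `B = 1 + M` with `N² = M² = 0` and `N * M = 2 J` (`J` the all-ones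
matrix), so `A ^ r * B ^ s = 1 + r N + s M + 2 r s J`. Multiplied by `sgn (r s)`, the term
`2 |r s| J` dominates `|r s| • 1` and absorbs the linear terms, because
`(|r| - 1) (|s| - 1) ≥ 0` for nonzero integers. -/

theorem MonoidHom.map_zpow_of_sub_one_sq_eq_zero {G R : Type*} [Group G] [Ring R]
    (f : G →* R) (g : G) (hg : (f g - 1) ^ 2 = 0) (k : ℤ) :
    f (g ^ k) = 1 + k • (f g - 1) := by
  induction k using Int.induction_on with
  | zero => simp
  | succ k ih =>
    rw [_root_.zpow_add_one, map_mul, ih]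
    simp only [add_smul, one_smul, zsmul_eq_mul, Int.cast_natCast]
    linear_combination (norm := noncomm_ring) (k : R) * hg
  | pred k ih =>
    have hinv : f g * (2 - f g) = 1 := by linear_combination (norm := noncomm_ring) -hg
    calc f (g ^ (-(k : ℤ) - 1))
        = f (g ^ (-(k : ℤ) - 1) * g) * (2 - f g) := by rw [map_mul, mul_assoc, hinv, mul_one]
      _ = 1 + (-(k : ℤ) - 1) • (f g - 1) := by
        rw [← _root_.zpow_add_one, sub_add_cancel, ih]
        simp only [sub_smul, one_smul, zsmul_eq_mul, Int.cast_neg, Int.cast_natCast]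
        linear_combination (norm := noncomm_ring) (k : R) * hg

theorem coe_newmanA_zpow (r : ℤ) :
    ((NewmanA ^ r : SpecialLinearGroup (Fin 2) ℤ) : Matrix (Fin 2) (Fin 2) ℤ) =
      1 + r • !![-1, 1; -1, 1] := by
  have hN : (NewmanA : Matrix (Fin 2) (Fin 2) ℤ) - 1 = !![-1, 1; -1, 1] := by
    ext i j; fin_cases i <;> fin_cases j <;> rfl
  rw [← hN]
  refine SpecialLinearGroup.coeMonoidHom.map_zpow_of_sub_one_sq_eq_zero NewmanA ?_ r
  rw [SpecialLinearGroup.coeMonoidHom_apply, hN]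
  decide

theorem coe_newmanB_zpow (s : ℤ) :
    ((NewmanB ^ s : SpecialLinearGroup (Fin 2) ℤ) : Matrix (Fin 2) (Fin 2) ℤ) =
      1 + s • !![-1, -1; 1, 1] := by
  have hM : (NewmanB : Matrix (Fin 2) (Fin 2) ℤ) - 1 = !![-1, -1; 1, 1] := by
    ext i j; fin_cases i <;> fin_cases j <;> rfl
  rw [← hM]
  refine SpecialLinearGroup.coeMonoidHom.map_zpow_of_sub_one_sq_eq_zero NewmanB ?_ s
  rw [SpecialLinearGroup.coeMonoidHom_apply, hM]
  decide

theorem coe_newmanA_zpow_mul_newmanB_zpow (r s : ℤ) :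
    ((NewmanA ^ r * NewmanB ^ s : SpecialLinearGroup (Fin 2) ℤ) : Matrix (Fin 2) (Fin 2) ℤ) =
      !![1 - r - s + 2 * r * s, r - s + 2 * r * s; s - r + 2 * r * s, 1 + r + s + 2 * r * s] := by
  change ((NewmanA ^ r : SpecialLinearGroup (Fin 2) ℤ) : Matrix (Fin 2) (Fin 2) ℤ) *
    ((NewmanB ^ s : SpecialLinearGroup (Fin 2) ℤ) : Matrix (Fin 2) (Fin 2) ℤ) = _
  rw [coe_newmanA_zpow, coe_newmanB_zpow]
  ext i j
  fin_cases i <;> fin_cases j <;>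
    simp [Matrix.mul_apply, Fin.sum_univ_two, Matrix.one_apply] <;> ring

theorem Int.abs_mul_le_sign_mul_mul_one_add_add_add_two_mul (r s : ℤ) :
    |r * s| ≤ (r * s).sign * (1 + r + s + 2 * r * s) := by
  rcases lt_trichotomy r 0 with hr | rfl | hr <;> rcases lt_trichotomy s 0 with hs | rfl | hs <;>
    simp [Int.sign_mul, Int.sign_eq_one_of_pos, Int.sign_eq_neg_one_of_neg, abs_mul, abs_of_neg,
      abs_of_pos, *] <;> nlinarith

theorem Int.sign_mul_mul_sub_add_two_mul_nonneg (r s : ℤ) :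
    0 ≤ (r * s).sign * (r - s + 2 * r * s) := by
  rcases lt_trichotomy r 0 with hr | rfl | hr <;> rcases lt_trichotomy s 0 with hs | rfl | hs <;>
    simp [Int.sign_mul, Int.sign_eq_one_of_pos, Int.sign_eq_neg_one_of_neg, *] <;> nlinarith

theorem newman_pow_dominates_general (r s : ℤ) :
    EntrywiseDom ((r * s).sign • ((NewmanA ^ r * NewmanB ^ s :
        Matrix.SpecialLinearGroup (Fin 2) ℤ) : Matrix (Fin 2) (Fin 2) ℤ))
      (|r * s| • (1 : Matrix (Fin 2) (Fin 2) ℤ)) := by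
  intro i j
  rw [coe_newmanA_zpow_mul_newmanB_zpow]
  fin_cases i <;> fin_cases j <;>
    simp only [Fin.zero_eta, Fin.mk_one, Fin.isValue, Matrix.smul_apply, one_apply_eq, ne_eq,
      zero_ne_one, one_ne_zero, not_false_eq_true, one_apply_ne, Int.zsmul_eq_mul, mul_one,
      mul_zero, abs_abs, abs_zero, of_apply, cons_val', cons_val_zero, cons_val_one,
      cons_val_fin_one]
  · convert Int.abs_mul_le_sign_mul_mul_one_add_add_add_two_mul (-r) (-s) using 2 <;> ring_nf
  · exact Int.sign_mul_mul_sub_add_two_mul_nonneg r s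
  · rw [mul_comm r s, mul_right_comm 2 r s]
    exact Int.sign_mul_mul_sub_add_two_mul_nonneg s r
  · exact Int.abs_mul_le_sign_mul_mul_one_add_add_add_two_mul r s

/-- For all nonzero integers `r`, `s`,
`sgn(rs) • (A ^ r * B ^ s) ≫ |rs| • 1`. -/
theorem newman_pow_dominates (r s : ℤ) (hr : r ≠ 0) (hs : s ≠ 0) :
    EntrywiseDom ((r * s).sign • ((NewmanA ^ r * NewmanB ^ s :
        Matrix.SpecialLinearGroup (Fin 2) ℤ) : Matrix (Fin 2) (Fin 2) ℤ))
      (|r * s| • (1 : Matrix (Fin 2) (Fin 2) ℤ)) :=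
  newman_pow_dominates_general r s
end

section
/- There exists a subgroup Λ of SL_2(ℤ) such that Λ is a free group of countably infinite rank and the action of Λ on ℤ² \ {0} by matrix multiplication is free, i.e., no nontrivial element of Λ fixes a nonzero vector of ℤ². -/
/-!
Take the free group on the matrices `g n = [[1 + a², a], [a, 1]]`, `a = 3n + 3`. In the
coordinates of `ℤ²`, `g n` sends every vector outside a narrow cone `y / x ≈ -a` into the narrow
cone `x / y ≈ a`, and `(g n)⁻¹` does the same with the roles of the two cones exchanged. All
these cones are pairwise disjoint, so this is a ping-pong table; moreover every ping-pong move
strictly increases `|x| + |y|`.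

Let `w` be a cyclically reduced word fixing `v ≠ 0`. If `v` is outside the repelling cone of the
last letter of `w`, then `v = w • v` lies in the attracting cone of the first letter, so applying
`w` to `v` strictly increases `|x| + |y|`. Otherwise the same argument applies to `w⁻¹`. Since every
nontrivial element of a free group is conjugate to a cyclically reduced word, no nontrivial
element fixes a nonzero vector; in particular the free group embeds into `SL₂(ℤ)`.
-/

open Matrix

theorem fst_eq_imp_snd_eq_iff {ι : Type*} {p q : ι × Bool} :
    (p.1 = q.1 → p.2 = q.2) ↔ q ≠ (p.1, !p.2) := by
  obtain ⟨i, b⟩ := p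
  obtain ⟨j, c⟩ := q
  cases b <;> cases c <;> simp [eq_comm]

theorem FreeGroup.lift_mk_singleton {ι G : Type*} [Group G] (g : ι → G) (i : ι) (b : Bool) :
    FreeGroup.lift g (FreeGroup.mk [(i, b)]) = cond b (g i) (g i)⁻¹ := by
  simp [FreeGroup.lift_mk]

/-- `X p` is the attracting set of the letter `p`; `ν` is a potential that grows at every
ping-pong move. -/
structure IsExpandingPingPong {ι G α β : Type*} [Group G] [MulAction G α] [Preorder β]
    (f : FreeGroup ι →* G) (X : ι × Bool → Set α) (ν : α → β) : Prop where
  pairwise_disjoint : Pairwise fun p q => Disjoint (X p) (X q)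
  mapsTo : ∀ p v, v ∉ X (p.1, !p.2) → f (FreeGroup.mk [p]) • v ∈ X p
  lt : ∀ p q, q ≠ (p.1, !p.2) → ∀ v ∈ X q, ν v < ν (f (FreeGroup.mk [p]) • v)

namespace IsExpandingPingPong

variable {ι G α β : Type*} [Group G] [MulAction G α] [Preorder β]
  {f : FreeGroup ι →* G} {X : ι × Bool → Set α} {ν : α → β}

theorem notMem_of_mem (h : IsExpandingPingPong f X ν) {p q : ι × Bool} (hpq : p ≠ q) {v : α}
    (hv : v ∈ X p) : v ∉ X q :=
  Set.disjoint_left.mp (h.pairwise_disjoint hpq) hv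

theorem smul_mk_mem (h : IsExpandingPingPong f X ν) :
    ∀ {L : List (ι × Bool)} {p l : ι × Bool} {v : α}, FreeGroup.IsReduced L → p ∈ L.head? →
      l ∈ L.getLast? → v ∉ X (l.1, !l.2) → f (FreeGroup.mk L) • v ∈ X p
  | [], _, _, _, _, hp, _, _ => by simp at hp
  | [p'], p, l, v, _, hp, hl, hv => by
    obtain rfl : p' = p := by simpa using hp
    obtain rfl : p' = l := by simpa using hl
    exact h.mapsTo p' v hv
  | p' :: q :: L, p, l, v, hL, hp, hl, hv => by
    obtain rfl : p' = p := by simpa using hp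
    rw [FreeGroup.isReduced_cons_cons, fst_eq_imp_snd_eq_iff] at hL
    have hq : f (FreeGroup.mk (q :: L)) • v ∈ X q :=
      h.smul_mk_mem hL.2 (by simp) (by simpa using hl) hv
    rw [← List.singleton_append, ← FreeGroup.mul_mk, map_mul, mul_smul]
    exact h.mapsTo p' _ (h.notMem_of_mem hL.1 hq)

theorem lt_smul_mk (h : IsExpandingPingPong f X ν) :
    ∀ {L : List (ι × Bool)} {l r : ι × Bool} {v : α}, FreeGroup.IsReduced L →
      l ∈ L.getLast? → r ≠ (l.1, !l.2) → v ∈ X r → ν v < ν (f (FreeGroup.mk L) • v)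
  | [], _, _, _, _, hl, _, _ => by simp at hl
  | [p], l, r, v, _, hl, hr, hv => by
    obtain rfl : p = l := by simpa using hl
    exact h.lt p r hr v hv
  | p :: q :: L, l, r, v, hL, hl, hr, hv => by
    rw [FreeGroup.isReduced_cons_cons, fst_eq_imp_snd_eq_iff] at hL
    have hl' : l ∈ (q :: L).getLast? := by simpa using hl
    have hq : f (FreeGroup.mk (q :: L)) • v ∈ X q :=
      h.smul_mk_mem hL.2 (by simp) hl' (h.notMem_of_mem hr hv)
    rw [← List.singleton_append, ← FreeGroup.mul_mk, map_mul, mul_smul]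
    exact (h.lt_smul_mk hL.2 hl' hr hv).trans (h.lt p q hL.1 _ hq)

theorem smul_mk_ne_self (h : IsExpandingPingPong f X ν) {L : List (ι × Bool)}
    (hL : FreeGroup.IsCyclicallyReduced L) (hne : L ≠ []) (v : α) :
    f (FreeGroup.mk L) • v ≠ v := by
  classical
  obtain ⟨p, hp⟩ : ∃ p, p ∈ L.head? := Option.isSome_iff_exists.mp (by simpa using hne)
  obtain ⟨l, hl⟩ : ∃ l, l ∈ L.getLast? := Option.isSome_iff_exists.mp (by simpa using hne)
  have hpl : p ≠ (l.1, !l.2) := fst_eq_imp_snd_eq_iff.mp (hL.2 l hl p hp)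
  intro hfix
  by_cases hv : v ∈ X (l.1, !l.2)
  · have hinv : FreeGroup.IsReduced (FreeGroup.invRev L) :=
      FreeGroup.isReduced_iff_reduce_eq.mpr
        (by rw [FreeGroup.reduce_invRev, hL.isReduced.reduce_eq])
    have hl' : (p.1, !p.2) ∈ (FreeGroup.invRev L).getLast? := by
      simp [FreeGroup.invRev, List.getLast?_reverse, Option.mem_def.mp hp]
    have hlt : ν v < ν ((f (FreeGroup.mk L))⁻¹ • v) := by
      rw [← map_inv, FreeGroup.inv_mk]
      exact h.lt_smul_mk hinv hl' (by simpa [eq_comm] using hpl) hv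
    rw [inv_smul_eq_iff.mpr hfix.symm] at hlt
    exact lt_irrefl _ hlt
  · have hvp : v ∈ X p := hfix ▸ h.smul_mk_mem hL.isReduced hp hl hv
    have hlt := h.lt_smul_mk hL.isReduced hl hpl hvp
    rw [hfix] at hlt
    exact lt_irrefl _ hlt

theorem smul_ne_self (h : IsExpandingPingPong f X ν) {w : FreeGroup ι} (hw : w ≠ 1) (v : α) :
    f w • v ≠ v := by
  classical
  set C := FreeGroup.reduceCyclically.conjugator w.toWord
  set R := FreeGroup.reduceCyclically w.toWord
  have hconj : w = FreeGroup.mk C * FreeGroup.mk R * (FreeGroup.mk C)⁻¹ := by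
    rw [FreeGroup.inv_mk, FreeGroup.mul_mk, FreeGroup.mul_mk,
      FreeGroup.reduceCyclically.conj_conjugator_reduceCyclically, FreeGroup.mk_toWord]
  have hR : R ≠ [] := by
    rintro hR
    rw [hR, FreeGroup.mul_mk, List.append_nil, mul_inv_cancel] at hconj
    exact hw hconj
  intro hfix
  rw [hconj, map_mul, map_mul, map_inv, mul_smul, mul_smul, smul_eq_iff_eq_inv_smul] at hfix
  exact h.smul_mk_ne_self
    (FreeGroup.reduceCyclically.isCyclicallyReduced FreeGroup.isReduced_toWord) hR _ hfix

theorem injective [Nonempty α] (h : IsExpandingPingPong f X ν) : Function.Injective f := by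
  refine (injective_iff_map_eq_one f).mpr fun w hw => ?_
  by_contra hne
  obtain ⟨v⟩ := ‹Nonempty α›
  exact h.smul_ne_self hne v (by rw [hw, one_smul])

end IsExpandingPingPong

instance {G M : Type*} [Group G] [AddMonoid M] [DistribMulAction G M] :
    MulAction G {v : M // v ≠ 0} where
  smul g v := ⟨g • v.1, (smul_ne_zero_iff_ne g).mpr v.2⟩
  one_smul v := Subtype.ext (one_smul G v.1)
  mul_smul g h v := Subtype.ext (mul_smul g h v.1)

@[simp]
theorem Subtype.val_smul_ne_zero {G M : Type*} [Group G] [AddMonoid M] [DistribMulAction G M]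
    (g : G) (v : {v : M // v ≠ 0}) : (g • v).1 = g • v.1 :=
  rfl

theorem fin_two_ne_zero_iff {R : Type*} [Zero R] {v : Fin 2 → R} :
    v ≠ 0 ↔ v 0 ≠ 0 ∨ v 1 ≠ 0 := by
  simp only [Ne, funext_iff, Fin.forall_fin_two, Pi.zero_apply, not_and_or]

section Shear

variable {R : Type*} [CommRing R]

/-- The product of the shears `[[1, a], [0, 1]]` and `[[1, 0], [a, 1]]`. -/
def shearProd (a : R) : SpecialLinearGroup (Fin 2) R :=
  ⟨!![1 + a ^ 2, a; a, 1], by simp [det_fin_two_of]; ring⟩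

theorem shearProd_smul (a : R) (v : Fin 2 → R) :
    shearProd a • v = ![v 0 + a * (a * v 0 + v 1), a * v 0 + v 1] := by
  change (shearProd a : Matrix (Fin 2) (Fin 2) R) *ᵥ v = _
  ext i
  fin_cases i
  · simp [shearProd, vecHead, vecTail]
    ring
  · simp [shearProd, vecHead, vecTail]

theorem shearProd_inv_smul (a : R) (v : Fin 2 → R) :
    (shearProd a)⁻¹ • v = ![-a * v 1 + v 0, v 1 + -a * (-a * v 1 + v 0)] := by
  rw [inv_smul_eq_iff, shearProd_smul]
  ext i
  fin_cases i <;> simp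

variable [LinearOrder R]

def NearRatio (a x y : R) : Prop := |x - a * y| ≤ |y|

theorem nearRatio_shear {a x y : R} (h : ¬NearRatio (-a) y x) :
    NearRatio a (x + a * (a * x + y)) (a * x + y) := by
  unfold NearRatio at h ⊢
  rw [neg_mul, sub_neg_eq_add, add_comm] at h
  simpa using (not_le.mp h).le

variable {ι : Type*} {a : ι → R}

/- `(shearProd a)⁻¹` is `shearProd (-a)` conjugated by the swap of the two coordinates, so the
attracting set of the inverse letter is that of `-a` with the coordinates swapped. -/
variable (a) in
def shearAttractor : ι × Bool → Set {v : Fin 2 → R // v ≠ 0}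
  | (i, true) => {v | NearRatio (a i) (v.1 0) (v.1 1)}
  | (i, false) => {v | NearRatio (-a i) (v.1 1) (v.1 0)}

theorem shearAttractor_mapsTo (p : ι × Bool) (v : {v : Fin 2 → R // v ≠ 0})
    (hv : v ∉ shearAttractor a (p.1, !p.2)) :
    FreeGroup.lift (shearProd ∘ a) (FreeGroup.mk [p]) • v ∈ shearAttractor a p := by
  obtain ⟨i, _ | _⟩ := p <;>
    simp only [shearAttractor, Set.mem_ofPred_eq, Bool.not_true, Bool.not_false,
      FreeGroup.lift_mk_singleton, Function.comp_apply, cond_true, cond_false,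
      Subtype.val_smul_ne_zero] at hv ⊢
  · rw [shearProd_inv_smul]
    exact nearRatio_shear (by rwa [neg_neg])
  · rw [shearProd_smul]
    exact nearRatio_shear hv

variable [IsStrictOrderedRing R]

namespace NearRatio

variable {a b x y : R}

theorem two_mul_abs_le_abs (h : NearRatio a x y) (ha : 3 ≤ |a|) : 2 * |y| ≤ |x| := by
  have := abs_sub_abs_le_abs_sub (a * y) x
  rw [abs_sub_comm, abs_mul] at this
  unfold NearRatio at h
  nlinarith [abs_nonneg y]

theorem two_mul_abs_le_abs_sub (h : NearRatio b x y) (hab : 3 ≤ |a - b|) :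
    2 * |y| ≤ |x - a * y| := by
  have := abs_sub_abs_le_abs_sub ((a - b) * y) (x - b * y)
  rw [show (a - b) * y - (x - b * y) = -(x - a * y) by ring, abs_neg, abs_mul] at this
  unfold NearRatio at h
  nlinarith [mul_le_mul_of_nonneg_right hab (abs_nonneg y)]

theorem eq_zero (h : NearRatio a x y) (h' : NearRatio b x y) (hab : 3 ≤ |a - b|) :
    x = 0 ∧ y = 0 := by
  have hy : y = 0 := by
    have := h'.two_mul_abs_le_abs_sub hab
    unfold NearRatio at h
    exact abs_nonpos_iff.mp (by linarith)
  subst hy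
  simpa [NearRatio] using h

theorem eq_zero_of_swap (h : NearRatio a x y) (h' : NearRatio b y x) (ha : 3 ≤ |a|)
    (hb : 3 ≤ |b|) : x = 0 ∧ y = 0 := by
  have := h.two_mul_abs_le_abs ha
  have := h'.two_mul_abs_le_abs hb
  exact ⟨abs_nonpos_iff.mp (by linarith [abs_nonneg y]),
    abs_nonpos_iff.mp (by linarith [abs_nonneg x])⟩

end NearRatio

theorem two_mul_abs_le_abs_mul_add {a x y : R} (ha : 3 ≤ |a|) (h : 2 * |y| ≤ |x|) :
    2 * |x| ≤ |a * x + y| := by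
  have := abs_sub_abs_le_abs_sub (a * x) (-y)
  rw [abs_neg, sub_neg_eq_add, abs_mul] at this
  nlinarith [abs_nonneg x]

theorem abs_add_abs_lt_shear {a x y : R} (ha : 3 ≤ |a|) (h : 2 * |x| ≤ |a * x + y|)
    (hxy : x ≠ 0 ∨ y ≠ 0) : |x| + |y| < |x + a * (a * x + y)| + |a * x + y| := by
  set u := a * x + y
  have hy : |y| ≤ |u| + |a| * |x| := by
    rw [show y = u - a * x by ring, ← abs_mul]
    exact abs_sub _ _
  have hxu := abs_sub_abs_le_abs_sub (a * u) (-x)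
  rw [abs_neg, sub_neg_eq_add, add_comm, abs_mul] at hxu
  have hu : 0 < |u| := by
    by_cases hx : x = 0
    · simpa [u, hx] using hxy
    · linarith [abs_pos.mpr hx]
  nlinarith [abs_nonneg x]

theorem pairwise_disjoint_shearAttractor (ha : ∀ i, 3 ≤ |a i|)
    (hsep : Pairwise fun i j => 3 ≤ |a i - a j|) :
    Pairwise fun p q => Disjoint (shearAttractor a p) (shearAttractor a q) := by
  rintro ⟨i, b⟩ ⟨j, c⟩ hpq
  refine Set.disjoint_left.mpr fun v hp hq => ?_
  suffices h : v.1 0 = 0 ∧ v.1 1 = 0 from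
    (fin_two_ne_zero_iff.mp v.2).elim (· h.1) (· h.2)
  have hij (h : b = c) : i ≠ j := by rintro rfl; exact hpq (by rw [h])
  cases b <;> cases c <;> simp only [shearAttractor, Set.mem_ofPred_eq] at hp hq
  · exact (hp.eq_zero hq (by rw [neg_sub_neg, abs_sub_comm]; exact hsep (hij rfl))).symm
  · exact hq.eq_zero_of_swap hp (ha j) (by rw [abs_neg]; exact ha i)
  · exact hp.eq_zero_of_swap hq (ha i) (by rw [abs_neg]; exact ha j)
  · exact hp.eq_zero hq (hsep (hij rfl))

theorem abs_add_abs_lt_shearProd_smul (ha : ∀ i, 3 ≤ |a i|)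
    (hsep : Pairwise fun i j => 3 ≤ |a i - a j|) (p q : ι × Bool) (hpq : q ≠ (p.1, !p.2))
    (v : {v : Fin 2 → R // v ≠ 0}) (hv : v ∈ shearAttractor a q) :
    |v.1 0| + |v.1 1| <
      |(FreeGroup.lift (shearProd ∘ a) (FreeGroup.mk [p]) • v).1 0| +
        |(FreeGroup.lift (shearProd ∘ a) (FreeGroup.mk [p]) • v).1 1| := by
  have hv0 := fin_two_ne_zero_iff.mp v.2
  obtain ⟨i, _ | _⟩ := p <;> obtain ⟨j, _ | _⟩ := q <;>
    simp only [shearAttractor, Set.mem_ofPred_eq, FreeGroup.lift_mk_singleton,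
      Function.comp_apply, cond_true, cond_false, Subtype.val_smul_ne_zero, shearProd_smul,
      shearProd_inv_smul, cons_val_zero, cons_val_one, Bool.not_true, Bool.not_false, ne_eq,
      Prod.mk.injEq, and_true] at hv hpq ⊢
  · have := hv.two_mul_abs_le_abs (by rw [abs_neg]; exact ha j)
    have := two_mul_abs_le_abs_mul_add (by rw [abs_neg]; exact ha i) this
    linarith [abs_add_abs_lt_shear (by rw [abs_neg]; exact ha i) this hv0.symm]
  · have := hv.two_mul_abs_le_abs_sub (hsep (Ne.symm hpq))
    rw [sub_eq_neg_add, ← neg_mul] at this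
    linarith [abs_add_abs_lt_shear (by rw [abs_neg]; exact ha i) this hv0.symm]
  · have := hv.two_mul_abs_le_abs_sub (a := -a i)
      (by rw [neg_sub_neg, abs_sub_comm]; exact hsep (Ne.symm hpq))
    rw [neg_mul, sub_neg_eq_add, add_comm] at this
    linarith [abs_add_abs_lt_shear (ha i) this hv0]
  · have := hv.two_mul_abs_le_abs (ha j)
    have := two_mul_abs_le_abs_mul_add (ha i) this
    linarith [abs_add_abs_lt_shear (ha i) this hv0]

theorem isExpandingPingPong_shearProd (ha : ∀ i, 3 ≤ |a i|)
    (hsep : Pairwise fun i j => 3 ≤ |a i - a j|) :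
    IsExpandingPingPong (FreeGroup.lift (shearProd ∘ a)) (shearAttractor a)
      fun v => |v.1 0| + |v.1 1| where
  pairwise_disjoint := pairwise_disjoint_shearAttractor ha hsep
  mapsTo := shearAttractor_mapsTo
  lt := abs_add_abs_lt_shearProd_smul ha hsep

end Shear

/-- There is a subgroup `Λ` of `SL₂(ℤ)` which is a free group of countably
infinite rank and which acts freely on `ℤ² \ {0}` by matrix multiplication:
no nontrivial element of `Λ` fixes a nonzero vector of `ℤ²`. -/
theorem exists_free_subgroup_acting_freely :
    ∃ Λ : Subgroup (Matrix.SpecialLinearGroup (Fin 2) ℤ),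
      Nonempty (Λ ≃* FreeGroup ℕ) ∧
      ∀ g ∈ Λ, g ≠ 1 → ∀ v : Fin 2 → ℤ, v ≠ 0 →
        Matrix.mulVec ((g : Matrix.SpecialLinearGroup (Fin 2) ℤ) :
          Matrix (Fin 2) (Fin 2) ℤ) v ≠ v := by
  have ha (n : ℕ) : 3 ≤ |(3 * n + 3 : ℤ)| := by
    rw [abs_of_pos (by positivity)]
    omega
  have hsep : Pairwise fun m n : ℕ => 3 ≤ |(3 * m + 3 : ℤ) - (3 * n + 3)| := by
    intro m n hmn
    rw [le_abs]
    omega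
  have h := isExpandingPingPong_shearProd ha hsep
  have : Nonempty {v : Fin 2 → ℤ // v ≠ 0} := nonempty_subtype.mpr (exists_ne 0)
  refine ⟨(FreeGroup.lift _).range, ⟨(MonoidHom.ofInjective h.injective).symm⟩, ?_⟩
  rintro _ ⟨w, rfl⟩ hw v hv hfix
  exact h.smul_ne_self (by rintro rfl; exact hw (map_one _)) ⟨v, hv⟩ (Subtype.ext hfix)
end

section
/- Let π : Γ → U(H) be a unitary representation of a countable discrete group Γ. Then the following are equivalent: (a) the tensor product representation π ⊗ conj(π) on H ⊗ conj(H) has a nonzero invariant vector; (b) there exists a unitary representation σ of Γ such that π ⊗ σ has a nonzero invariant vector; (c) π contains a nonzero finite-dimensional subrepresentation. -/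
/-!
An intertwiner `T` from `σ` to `π` yields the positive operator `T T*`, which commutes with `π`.
A Hilbert–Schmidt operator is small off a finite-dimensional subspace, hence a norm limit of
finite-rank operators and compact; so `T T*` is a nonzero compact self-adjoint operator, and its
eigenspace for a nonzero eigenvalue is a nonzero finite-dimensional `π`-invariant subspace.
Conversely, the orthogonal projection onto a finite-dimensional invariant subspace is a nonzero
Hilbert–Schmidt operator commuting with `π`.
-/

open scoped InnerProductSpace

/-- A continuous linear map between inner product spaces is Hilbert–Schmidt
if the sums `∑ ‖T v‖²` over finite orthonormal families are uniformly
bounded. -/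
def IsHilbertSchmidt {K H : Type} [NormedAddCommGroup K]
    [InnerProductSpace ℂ K] [NormedAddCommGroup H] [InnerProductSpace ℂ H]
    (T : K →L[ℂ] H) : Prop :=
  ∃ C : ℝ, ∀ s : Finset K, (∀ v ∈ s, ‖v‖ = 1) →
    (∀ v ∈ s, ∀ w ∈ s, v ≠ w → ⟪v, w⟫_ℂ = 0) →
    ∑ v ∈ s, ‖T v‖ ^ 2 ≤ C

/-- A witness that `π ⊗ σ` has a nonzero invariant vector for some unitary
representation `σ` of `Γ` on a Hilbert space `K`: under the identification of
invariant vectors of `π ⊗ conj σ` with Hilbert–Schmidt intertwiners, this is a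
nonzero Hilbert–Schmidt operator `T : K → H` with `π γ ∘ T = T ∘ σ γ`. -/
structure TensorInvariantWitness (Γ : Type) [Group Γ] (H : Type)
    [NormedAddCommGroup H] [InnerProductSpace ℂ H] [CompleteSpace H]
    (π : Γ →* (H ≃ₗᵢ[ℂ] H)) : Type 1 where
  K : Type
  [instN : NormedAddCommGroup K]
  [instI : InnerProductSpace ℂ K]
  [instC : CompleteSpace K]
  σ : Γ →* (K ≃ₗᵢ[ℂ] K)
  T : K →L[ℂ] H
  hs : IsHilbertSchmidt T
  ne : T ≠ 0
  intertwines : ∀ (γ : Γ) (x : K), π γ (T x) = T (σ γ x)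

open Module Submodule Module.End ContinuousLinearMap Filter

variable {K H : Type} [NormedAddCommGroup K] [InnerProductSpace ℂ K]
  [NormedAddCommGroup H] [InnerProductSpace ℂ H]

theorem IsHilbertSchmidt.exists_finiteDimensional_norm_le {T : K →L[ℂ] H}
    (hT : IsHilbertSchmidt T) {ε : ℝ} (hε : 0 < ε) :
    ∃ U : Submodule ℂ K, FiniteDimensional ℂ U ∧ ∀ w ∈ Uᗮ, ‖w‖ = 1 → ‖T w‖ ≤ ε := by
  classical
  obtain ⟨C, hC⟩ := hT
  by_contra! h
  -- Otherwise unit vectors with `ε < ‖T v‖` can be chosen orthonormal one at a time.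
  have grow : ∀ n : ℕ, ∃ s : Finset K, (∀ v ∈ s, ‖v‖ = 1) ∧
      (∀ v ∈ s, ∀ w ∈ s, v ≠ w → ⟪v, w⟫_ℂ = 0) ∧ n * ε ^ 2 ≤ ∑ v ∈ s, ‖T v‖ ^ 2 := by
    intro n
    induction n with
    | zero => exact ⟨∅, by simp, by simp, by simp⟩
    | succ n ih =>
      obtain ⟨s, hs1, hs0, hsum⟩ := ih
      obtain ⟨w, hw, hw1, hTw⟩ := h (span ℂ s) (FiniteDimensional.span_finset ℂ s)
      have hsw : ∀ v ∈ s, ⟪v, w⟫_ℂ = 0 := fun v hv =>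
        (mem_orthogonal _ _).1 hw v (subset_span hv)
      have hws : w ∉ s := fun hmem => by simpa [hw1] using hsw w hmem
      refine ⟨insert w s, ?_, ?_, ?_⟩
      · simpa [hw1] using hs1
      · simp only [Finset.mem_insert]
        rintro u (rfl | hu) v (rfl | hv) huv
        · exact absurd rfl huv
        · rw [← inner_conj_symm, hsw v hv, map_zero]
        · exact hsw u hu
        · exact hs0 u hu v hv huv
      · rw [Finset.sum_insert hws]
        push_cast
        nlinarith
  obtain ⟨n, hn⟩ := exists_nat_gt (C / ε ^ 2)
  obtain ⟨s, hs1, hs0, hsum⟩ := grow n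
  rw [div_lt_iff₀ (by positivity)] at hn
  linarith [hC s hs1 hs0]

theorem isCompactOperator_comp_starProjection {T : K →L[ℂ] H} (U : Submodule ℂ K)
    [FiniteDimensional ℂ U] : IsCompactOperator (T ∘L U.starProjection) := by
  have hU : IsCompactOperator (id : U → U) := isCompactOperator_id_iff_finiteDimensional.2 ‹_›
  exact (hU.clm_comp (T ∘L U.subtypeL)).comp_clm U.orthogonalProjectionOnto

theorem IsHilbertSchmidt.isCompactOperator [CompleteSpace H] {T : K →L[ℂ] H}
    (hT : IsHilbertSchmidt T) : IsCompactOperator T := by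
  have approx : ∀ n : ℕ, ∃ F : K →L[ℂ] H, IsCompactOperator F ∧ ‖T - F‖ ≤ 1 / (n + 1) := by
    intro n
    obtain ⟨U, _, hU⟩ := hT.exists_finiteDimensional_norm_le (ε := 1 / (n + 1)) (by positivity)
    refine ⟨T ∘L U.starProjection, isCompactOperator_comp_starProjection U, ?_⟩
    have hTU : ‖T ∘L Uᗮ.subtypeL‖ ≤ 1 / (n + 1) :=
      opNorm_le_of_unit_norm (by positivity) fun w hw => hU w w.2 hw
    calc ‖T - T ∘L U.starProjection‖
        = ‖(T ∘L Uᗮ.subtypeL) ∘L Uᗮ.orthogonalProjectionOnto‖ := by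
          rw [comp_assoc, ← starProjection, starProjection_orthogonal, comp_sub, comp_id]
      _ ≤ ‖T ∘L Uᗮ.subtypeL‖ * ‖Uᗮ.orthogonalProjectionOnto‖ := opNorm_comp_le _ _
      _ ≤ 1 / (n + 1) * 1 :=
          mul_le_mul hTU (orthogonalProjectionOnto_norm_le _) (by positivity) (by positivity)
      _ = 1 / (n + 1) := mul_one _
  choose F hF hTF using approx
  refine isCompactOperator_of_tendsto (l := atTop) ?_ (Eventually.of_forall hF)
  rw [tendsto_iff_norm_sub_tendsto_zero]
  exact squeeze_zero (fun _ => norm_nonneg _) (fun n => (norm_sub_rev _ _).trans_le (hTF n))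
    tendsto_one_div_add_atTop_nhds_zero_nat

section Representation

variable {Γ : Type} [Group Γ]

theorem adjoint_apply_of_intertwines [CompleteSpace K] [CompleteSpace H]
    {π : Γ →* (H ≃ₗᵢ[ℂ] H)} {σ : Γ →* (K ≃ₗᵢ[ℂ] K)} {T : K →L[ℂ] H}
    (hT : ∀ γ x, π γ (T x) = T (σ γ x)) (γ : Γ) (y : H) :
    adjoint T (π γ y) = σ γ (adjoint T y) := by
  refine ext_inner_right ℂ fun v => ?_
  rw [adjoint_inner_left, LinearIsometryEquiv.inner_map_eq_flip,
    LinearIsometryEquiv.inner_map_eq_flip, adjoint_inner_left, ← LinearIsometryEquiv.coe_inv,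
    ← LinearIsometryEquiv.coe_inv, ← map_inv, ← map_inv, hT]

theorem exists_finiteDimensional_invariant_of_isCompactOperator [CompleteSpace H]
    {π : Γ →* (H ≃ₗᵢ[ℂ] H)} {S : H →L[ℂ] H} (hS : IsCompactOperator S)
    (hS_symm : S.IsSymmetric) (hS0 : S ≠ 0) (hSπ : ∀ γ x, π γ (S x) = S (π γ x)) :
    ∃ V : Submodule ℂ H, V ≠ ⊥ ∧ FiniteDimensional ℂ V ∧ ∀ γ, ∀ x ∈ V, π γ x ∈ V := by
  obtain ⟨μ, hμ, hμ0⟩ : ∃ μ, HasEigenvalue (S : End ℂ H) μ ∧ μ ≠ 0 := by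
    by_contra! h
    exact hS0 ((eq_zero_of_forall_hasEigenvalue_eq_zero hS hS_symm).1 h)
  refine ⟨eigenspace (S : End ℂ H) μ, hasEigenvalue_iff.1 hμ,
    finite_dimensional_eigenspace hS μ hμ0, fun γ x hx => ?_⟩
  rw [mem_eigenspace_iff] at hx ⊢
  rw [coe_coe, ← hSπ, ← coe_coe, hx, map_smul]

theorem exists_finiteDimensional_invariant_of_compact_intertwiner [CompleteSpace K]
    [CompleteSpace H] {π : Γ →* (H ≃ₗᵢ[ℂ] H)} {σ : Γ →* (K ≃ₗᵢ[ℂ] K)} {T : K →L[ℂ] H}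
    (hT : IsCompactOperator T) (hT0 : T ≠ 0) (hTπ : ∀ γ x, π γ (T x) = T (σ γ x)) :
    ∃ V : Submodule ℂ H, V ≠ ⊥ ∧ FiniteDimensional ℂ V ∧ ∀ γ, ∀ x ∈ V, π γ x ∈ V := by
  refine exists_finiteDimensional_invariant_of_isCompactOperator (S := T ∘L adjoint T)
    (hT.comp_clm (adjoint T)) (isPositive_self_comp_adjoint T).isSymmetric ?_ fun γ x => ?_
  · intro h
    apply hT0
    simpa using (adjoint_comp_self_eq_zero_iff (A := adjoint T)).1 (by simpa using h)
  · simp only [comp_apply, hTπ, adjoint_apply_of_intertwines hTπ]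

theorem map_eq_of_forall_apply_mem {π : Γ →* (H ≃ₗᵢ[ℂ] H)} {V : Submodule ℂ H}
    (hV : ∀ γ, ∀ x ∈ V, π γ x ∈ V) (γ : Γ) :
    V.map ((π γ).toLinearEquiv : H →ₗ[ℂ] H) = V := by
  refine le_antisymm (map_le_iff_le_comap.2 fun x hx => hV γ x hx) fun x hx => ?_
  refine ⟨π γ⁻¹ x, hV γ⁻¹ x hx, ?_⟩
  simp [map_inv]

theorem apply_starProjection_of_forall_apply_mem {π : Γ →* (H ≃ₗᵢ[ℂ] H)} (V : Submodule ℂ H)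
    [V.HasOrthogonalProjection] (hV : ∀ γ, ∀ x ∈ V, π γ x ∈ V) (γ : Γ) (x : H) :
    π γ (V.starProjection x) = V.starProjection (π γ x) := by
  have h := starProjection_map_apply (π γ) V (π γ x)
  simp only [map_eq_of_forall_apply_mem hV γ, LinearIsometryEquiv.symm_apply_apply] at h
  exact h.symm

end Representation

theorem isHilbertSchmidt_starProjection (V : Submodule ℂ H) [FiniteDimensional ℂ V] :
    IsHilbertSchmidt V.starProjection := by
  let b := stdOrthonormalBasis ℂ V
  have parseval : ∀ x, ‖V.starProjection x‖ ^ 2 = ∑ i, ‖⟪(b i : H), x⟫_ℂ‖ ^ 2 := fun x => by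
    rw [starProjection_apply, norm_coe, ← b.sum_sq_norm_inner_right]
    simp
  refine ⟨finrank ℂ V, fun s hs1 hs0 => ?_⟩
  have hs : Orthonormal ℂ (fun v : s => (v : H)) :=
    ⟨fun v => hs1 v v.2, fun v w hvw => hs0 v v.2 w w.2 (Subtype.coe_injective.ne hvw)⟩
  calc ∑ v ∈ s, ‖V.starProjection v‖ ^ 2 = ∑ i, ∑ v ∈ s, ‖⟪v, (b i : H)⟫_ℂ‖ ^ 2 := by
        simp_rw [parseval, norm_inner_symm (b _ : H)]
        exact Finset.sum_comm
    _ ≤ ∑ i, ‖(b i : H)‖ ^ 2 := Finset.sum_le_sum fun i _ => by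
        rw [← Finset.sum_coe_sort s]
        exact hs.sum_inner_products_le _
    _ = finrank ℂ V := by simp [norm_coe, b.orthonormal.1]

theorem tensor_invariant_iff_finiteDimensional_subrep_general
    (Γ : Type) [Group Γ]
    (H : Type) [NormedAddCommGroup H] [InnerProductSpace ℂ H] [CompleteSpace H]
    (π : Γ →* (H ≃ₗᵢ[ℂ] H)) :
    ((∃ T : H →L[ℂ] H, IsHilbertSchmidt T ∧ T ≠ 0 ∧
        ∀ (γ : Γ) (x : H), π γ (T x) = T (π γ x)) ↔
      (∃ V : Submodule ℂ H, V ≠ ⊥ ∧ FiniteDimensional ℂ V ∧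
        ∀ (γ : Γ), ∀ x ∈ V, π γ x ∈ V)) ∧
    (Nonempty (TensorInvariantWitness Γ H π) ↔
      (∃ V : Submodule ℂ H, V ≠ ⊥ ∧ FiniteDimensional ℂ V ∧
        ∀ (γ : Γ), ∀ x ∈ V, π γ x ∈ V)) := by
  have of_witness : TensorInvariantWitness Γ H π →
      ∃ V : Submodule ℂ H, V ≠ ⊥ ∧ FiniteDimensional ℂ V ∧ ∀ γ, ∀ x ∈ V, π γ x ∈ V := by
    rintro ⟨K, σ, T, hT, hT0, hTσ⟩
    exact exists_finiteDimensional_invariant_of_compact_intertwiner hT.isCompactOperator hT0 hTσ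
  have to_intertwiner : (∃ V : Submodule ℂ H, V ≠ ⊥ ∧ FiniteDimensional ℂ V ∧
      ∀ γ, ∀ x ∈ V, π γ x ∈ V) → ∃ T : H →L[ℂ] H, IsHilbertSchmidt T ∧ T ≠ 0 ∧
        ∀ γ x, π γ (T x) = T (π γ x) := by
    rintro ⟨V, hV, _, hVπ⟩
    refine ⟨V.starProjection, isHilbertSchmidt_starProjection V, fun h => ?_,
      apply_starProjection_of_forall_apply_mem V hVπ⟩
    simpa [h] using V.norm_starProjection hV
  refine ⟨⟨fun ⟨T, hT, hT0, hTπ⟩ => of_witness ⟨H, π, T, hT, hT0, hTπ⟩, to_intertwiner⟩,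
    ⟨fun ⟨w⟩ => of_witness w, fun h => ?_⟩⟩
  obtain ⟨T, hT, hT0, hTπ⟩ := to_intertwiner h
  exact ⟨⟨H, π, T, hT, hT0, hTπ⟩⟩

/-- For a unitary representation `π` of a countable discrete group `Γ`, the
following are equivalent: (a) `π ⊗ conj π` has a nonzero invariant vector,
i.e. there is a nonzero `π`-equivariant Hilbert–Schmidt operator on `H`;
(b) `π ⊗ σ` has a nonzero invariant vector for some unitary representation
`σ`; (c) `π` has a nonzero finite-dimensional invariant subspace. -/
theorem tensor_invariant_iff_finiteDimensional_subrep
    (Γ : Type) [Group Γ] [Countable Γ]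
    (H : Type) [NormedAddCommGroup H] [InnerProductSpace ℂ H] [CompleteSpace H]
    (π : Γ →* (H ≃ₗᵢ[ℂ] H)) :
    ((∃ T : H →L[ℂ] H, IsHilbertSchmidt T ∧ T ≠ 0 ∧
        ∀ (γ : Γ) (x : H), π γ (T x) = T (π γ x)) ↔
      (∃ V : Submodule ℂ H, V ≠ ⊥ ∧ FiniteDimensional ℂ V ∧
        ∀ (γ : Γ), ∀ x ∈ V, π γ x ∈ V)) ∧
    (Nonempty (TensorInvariantWitness Γ H π) ↔
      (∃ V : Submodule ℂ H, V ≠ ⊥ ∧ FiniteDimensional ℂ V ∧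
        ∀ (γ : Γ), ∀ x ∈ V, π γ x ∈ V)) :=
  tensor_invariant_iff_finiteDimensional_subrep_general Γ H π
end

section
/- Let π : Γ → U(H) be a weak mixing unitary representation of a countable discrete group Γ, and let σ : Γ → U(K) be any unitary representation. Then π ⊗ σ is weak mixing. -/
open scoped InnerProductSpace

/-- A unitary representation `π` of `Γ` on `H` is weak mixing: matrix
coefficients over finite sets of vectors can be made simultaneously small. -/
def IsWeakMixingRep (Γ : Type) [Group Γ] (H : Type) [NormedAddCommGroup H]
    [InnerProductSpace ℂ H] (π : Γ →* (H ≃ₗᵢ[ℂ] H)) : Prop :=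
  ∀ (ε : ℝ), 0 < ε → ∀ s : Finset H,
    ∃ γ : Γ, ∀ ξ ∈ s, ∀ η ∈ s, ‖(⟪ξ, π γ η⟫_ℂ : ℂ)‖ < ε

/-- The inner product on the (algebraic) tensor product `H ⊗ K`, where a list
`u = [(ξ₁,η₁),…]` represents the vector `∑ᵢ ξᵢ ⊗ ηᵢ`:
`⟨∑ᵢ ξᵢ ⊗ ηᵢ, ∑ⱼ ξ'ⱼ ⊗ η'ⱼ⟩ = ∑ᵢⱼ ⟨ξᵢ, ξ'ⱼ⟩ ⟨ηᵢ, η'ⱼ⟩`. -/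
noncomputable def tensorInner {H K : Type} [NormedAddCommGroup H] [InnerProductSpace ℂ H]
    [NormedAddCommGroup K] [InnerProductSpace ℂ K]
    (u v : List (H × K)) : ℂ :=
  (u.map fun p => (v.map fun q => ⟪p.1, q.1⟫_ℂ * ⟪p.2, q.2⟫_ℂ).sum).sum

/-!
Write `N(u) = ∑ᵢ ‖ηᵢ‖` for `u = ∑ᵢ ξᵢ ⊗ ηᵢ`. If every coefficient `⟨ξᵢ, ξ'ⱼ⟩` is at most `δ`
in norm, Cauchy–Schwarz in `K` bounds `⟨u, v⟩` by `δ N(u) N(v)`. Since `σ γ` is isometric,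
`N` is unchanged when `π γ ⊗ σ γ` acts, so it suffices to apply weak mixing of `π` to the
finitely many `H`-components occurring in the given vectors, with `δ` small compared with
the largest `N(u)`.
-/

lemma norm_list_sum_map_le_of_le {α E : Type*} [SeminormedAddCommGroup E] (l : List α)
    {f : α → E} {g : α → ℝ} (h : ∀ a ∈ l, ‖f a‖ ≤ g a) :
    ‖(l.map f).sum‖ ≤ (l.map g).sum := by
  induction l with
  | nil => simp
  | cons a l ih =>
    simp only [List.map_cons, List.sum_cons]
    exact (norm_add_le _ _).trans <|
      add_le_add (h a List.mem_cons_self) (ih fun b hb => h b (List.mem_cons_of_mem a hb))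

lemma norm_tensorInner_le {H K : Type} [NormedAddCommGroup H] [InnerProductSpace ℂ H]
    [NormedAddCommGroup K] [InnerProductSpace ℂ K] {δ : ℝ} (u v : List (H × K))
    (h : ∀ p ∈ u, ∀ q ∈ v, ‖⟪p.1, q.1⟫_ℂ‖ ≤ δ) :
    ‖tensorInner u v‖ ≤ δ * (u.map fun p => ‖p.2‖).sum * (v.map fun q => ‖q.2‖).sum := by
  calc ‖tensorInner u v‖
      ≤ (u.map fun p => (v.map fun q => δ * ‖p.2‖ * ‖q.2‖).sum).sum :=
        norm_list_sum_map_le_of_le u fun p hp => norm_list_sum_map_le_of_le v fun q hq => by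
          rw [norm_mul, mul_assoc]
          exact mul_le_mul (h p hp q hq) (norm_inner_le_norm _ _) (norm_nonneg _)
            ((norm_nonneg _).trans (h p hp q hq))
    _ = δ * (u.map fun p => ‖p.2‖).sum * (v.map fun q => ‖q.2‖).sum := by
        simp only [List.sum_map_mul_left, ← List.sum_map_mul_right, mul_assoc]

lemma norm_tensorInner_map_le {H K : Type} [NormedAddCommGroup H] [InnerProductSpace ℂ H]
    [NormedAddCommGroup K] [InnerProductSpace ℂ K] {δ : ℝ} (T : H → H) (S : K ≃ₗᵢ[ℂ] K)
    (u v : List (H × K)) (h : ∀ p ∈ u, ∀ q ∈ v, ‖⟪p.1, T q.1⟫_ℂ‖ ≤ δ) :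
    ‖tensorInner u (v.map fun q => (T q.1, S q.2))‖ ≤
      δ * (u.map fun p => ‖p.2‖).sum * (v.map fun q => ‖q.2‖).sum := by
  refine (norm_tensorInner_le (δ := δ) u _ fun p hp q hq => ?_).trans_eq ?_
  · obtain ⟨q, hqv, rfl⟩ := List.mem_map.1 hq
    exact h p hp q hqv
  · simp only [List.map_map, Function.comp_def, LinearIsometryEquiv.norm_map]

theorem tensor_weakMixing_of_weakMixing_general
    (Γ : Type) [Group Γ]
    (H : Type) [NormedAddCommGroup H] [InnerProductSpace ℂ H]
    (K : Type) [NormedAddCommGroup K] [InnerProductSpace ℂ K]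
    (π : Γ →* (H ≃ₗᵢ[ℂ] H)) (σ : Γ →* (K ≃ₗᵢ[ℂ] K))
    (hwm : IsWeakMixingRep Γ H π) :
    ∀ (ε : ℝ), 0 < ε → ∀ L : List (List (H × K)),
      ∃ γ : Γ, ∀ u ∈ L, ∀ v ∈ L,
        ‖tensorInner u (v.map fun p => (π γ p.1, σ γ p.2))‖ < ε := by
  classical
  intro ε hε L
  let N : List (H × K) → ℝ := fun u => (u.map fun p => ‖p.2‖).sum
  have hN : ∀ u, 0 ≤ N u := fun u =>
    List.sum_nonneg fun x hx => by obtain ⟨p, -, rfl⟩ := List.mem_map.1 hx; positivity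
  obtain ⟨C, hC⟩ := (L.finite_toSet.image N).bddAbove
  have hC1 : 0 < C * C + 1 := add_pos_of_nonneg_of_pos (mul_self_nonneg C) one_pos
  set δ := ε / (C * C + 1)
  have hδ : 0 < δ := div_pos hε hC1
  let s : Finset H := (L.flatMap (List.map Prod.fst)).toFinset
  have hs : ∀ w ∈ L, ∀ p ∈ w, p.1 ∈ s := fun w hw p hp =>
    List.mem_toFinset.2 (List.mem_flatMap.2 ⟨w, hw, List.mem_map_of_mem hp⟩)
  obtain ⟨γ, hγ⟩ := hwm δ hδ s
  refine ⟨γ, fun u hu v hv => ?_⟩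
  have hNu : N u ≤ C := hC ⟨u, hu, rfl⟩
  have hNv : N v ≤ C := hC ⟨v, hv, rfl⟩
  calc ‖tensorInner u (v.map fun p => (π γ p.1, σ γ p.2))‖
      ≤ δ * N u * N v := norm_tensorInner_map_le _ _ u v fun p hp q hq =>
        (hγ _ (hs u hu p hp) _ (hs v hv q hq)).le
    _ ≤ δ * C * C :=
        mul_le_mul (mul_le_mul_of_nonneg_left hNu hδ.le) hNv (hN v)
          (mul_nonneg hδ.le ((hN u).trans hNu))
    _ < δ * (C * C + 1) := by rw [mul_assoc, mul_add_one]; exact lt_add_of_pos_right _ hδ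
    _ = ε := div_mul_cancel₀ _ hC1.ne'

/-- If `π` is a weak mixing unitary representation of a countable discrete
group `Γ` on `H` and `σ` is any unitary representation of `Γ` on `K`, then
`π ⊗ σ` is weak mixing: for every `ε > 0` and every finite family of vectors
of `H ⊗ K` (each represented as a finite sum of elementary tensors, i.e. a
list of pairs), some `γ` makes all the matrix coefficients of `π ⊗ σ` at
these vectors smaller than `ε`. -/
theorem tensor_weakMixing_of_weakMixing
    (Γ : Type) [Group Γ] [Countable Γ]
    (H : Type) [NormedAddCommGroup H] [InnerProductSpace ℂ H] [CompleteSpace H]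
    (K : Type) [NormedAddCommGroup K] [InnerProductSpace ℂ K] [CompleteSpace K]
    (π : Γ →* (H ≃ₗᵢ[ℂ] H)) (σ : Γ →* (K ≃ₗᵢ[ℂ] K))
    (hwm : IsWeakMixingRep Γ H π) :
    ∀ (ε : ℝ), 0 < ε → ∀ L : List (List (H × K)),
      ∃ γ : Γ, ∀ u ∈ L, ∀ v ∈ L,
        ‖tensorInner u (v.map fun p => (π γ p.1, σ γ p.2))‖ < ε :=
  tensor_weakMixing_of_weakMixing_general Γ H K π σ hwm
end

section
/- If Δ ≤ Λ are countable groups with Δ of infinite index in Λ, then for every finite subset F of the coset space Λ/Δ there exists λ ∈ Λ with λF ∩ F = ∅. -/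
open scoped Pointwise


/-- If `Δ ≤ Λ` are countable groups with `Δ` of infinite index in `Λ`, then
for every finite subset `F` of the coset space `Λ/Δ` there exists `l ∈ Λ`
with `lF ∩ F = ∅`. -/
theorem exists_translate_disjoint_of_infiniteIndex
    (Λ : Type) [Group Λ] [Countable Λ] (Δ : Subgroup Λ)
    (hinf : Infinite (Λ ⧸ Δ)) (F : Finset (Λ ⧸ Δ)) :
    ∃ l : Λ, ∀ x ∈ F, l • x ∉ F := by
  classical
  by_contra h
  push_neg at h
  choose rep hrep using fun x : Λ ⧸ Δ => QuotientGroup.mk_surjective (s := Δ) x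
  let H : (Λ ⧸ Δ) × (Λ ⧸ Δ) → Subgroup Λ :=
    fun p => Subgroup.map (MulAut.conj (rep p.1)).toMonoidHom Δ
  let g : (Λ ⧸ Δ) × (Λ ⧸ Δ) → Λ := fun p => rep p.2 * (rep p.1)⁻¹
  have hcovers : ⋃ i ∈ (F ×ˢ F), (g i) • (H i : Set Λ) = Set.univ := by
    ext l
    simp only [Set.mem_iUnion, Set.mem_univ, iff_true]
    obtain ⟨x, hx, hlx⟩ := h l
    refine ⟨(x, l • x), Finset.mem_product.mpr ⟨hx, hlx⟩, ?_⟩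
    have hq : (QuotientGroup.mk (rep (l • x)) : Λ ⧸ Δ) = QuotientGroup.mk (l * rep x) := by
      rw [hrep]
      nth_rewrite 1 [← hrep x]
      exact (MulAction.Quotient.smul_mk Δ l (rep x)).symm
    have hd : (rep (l • x))⁻¹ * (l * rep x) ∈ Δ := (QuotientGroup.eq).mp hq
    refine ⟨(MulAut.conj (rep x)) ((rep (l • x))⁻¹ * (l * rep x)), ⟨_, hd, rfl⟩, ?_⟩
    simp [g, MulAut.conj_apply]
    group
  obtain ⟨i, _, hfin⟩ := Subgroup.exists_finiteIndex_of_leftCoset_cover hcovers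
  have hidx : (H i).index = Δ.index := by
    refine Subgroup.index_map_eq Δ (MulEquiv.surjective _) ?_
    rw [(MonoidHom.ker_eq_bot_iff _).mpr (MulEquiv.injective _)]
    exact bot_le
  have : Δ.index = 0 := Subgroup.index_eq_zero_iff_infinite.mpr hinf
  exact hfin.index_ne_zero (hidx.trans this)
end
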